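/- Let P be a finite propositional logic program and M ⊆ At(P). Then M is a stable model of P if and only if there exists a set B ⊆ Neg(P) such that, with B′ = Neg(P) \ B, one has M = LM(P^{B′}), B ∩ M = ∅, and B′ ⊆ M. -/

import Mathlib

open scoped Classical

noncomputable section

/-- A propositional logic program rule: a head atom, a finite positive body and a
finite negative body. -/
structure LPRule (α : Type) where
  head : α
  pos : Finset α
  neg : Finset α
deriving DecidableEq

/-- A logic program is a finite set of rules. -/
abbrev LProgram (α : Type) := Finset (LPRule α)

variable {α : Type} [DecidableEq α]

/-- `horn r`: the Horn rule with the same head and positive body as `r`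
and empty negative body. -/
def LPRule.horn (r : LPRule α) : LPRule α := ⟨r.head, r.pos, ∅⟩

/-- A rule `r` is proper if `h(r) ∉ b⁺(r)` and `b⁺(r) ∩ b⁻(r) = ∅`. -/
def LPRule.proper (r : LPRule α) : Prop := r.head ∉ r.pos ∧ r.pos ∩ r.neg = ∅

/-- `At(P)`: the set of atoms occurring in `P`. -/
def atomsP (P : LProgram α) : Finset α := P.sup (fun r => insert r.head (r.pos ∪ r.neg))

/-- `h(P)`: the set of heads of rules of `P`. -/
def headsP (P : LProgram α) : Finset α := P.image LPRule.head

/-- `Neg(P)`: the set of atoms occurring negated in `P`. -/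
def negP (P : LProgram α) : Finset α := P.sup LPRule.neg

/-- The least model of a (Horn) program `Q`, given as a set of rules (negative bodies
are ignored; Horn rules have empty negative bodies): the least set `M` of atoms such
that `h(r) ∈ M` whenever `r ∈ Q` and `b⁺(r) ⊆ M`. -/
def LM (Q : Set (LPRule α)) : Set α :=
  ⋂₀ {M : Set α | ∀ r ∈ Q, (↑r.pos : Set α) ⊆ M → r.head ∈ M}

/-- The reduct `P^S`: delete every rule whose negative body meets `S` and remove the
negative bodies of the remaining rules. -/
def reduct (P : LProgram α) (S : Set α) : Set (LPRule α) :=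
  LPRule.horn '' {r | r ∈ P ∧ (↑r.neg : Set α) ∩ S = ∅}

/-- `M` is a stable model of `P` if `M = LM (P^M)`. -/
def isStable (P : LProgram α) (M : Set α) : Prop :=
  M = LM (reduct P M)

/-! The reduct `P^S` only sees `S ∩ Neg(P)`. For a stable model take `B = Neg(P) \ M`;
conversely the three conditions on `B` force `Neg(P) \ B = Neg(P) ∩ M`, so `P^{Neg(P) \ B} = P^M`. -/

lemma LPRule.neg_subset_negP {P : LProgram α} {r : LPRule α} (hr : r ∈ P) :
    (↑r.neg : Set α) ⊆ ↑(negP P) :=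
  Finset.coe_subset.mpr (Finset.le_sup hr)

lemma reduct_negP_inter (P : LProgram α) (S : Set α) :
    reduct P (↑(negP P) ∩ S) = reduct P S := by
  unfold reduct
  congr 1
  ext r
  refine and_congr_right fun hr => ?_
  rw [← Set.inter_assoc, Set.inter_eq_left.mpr (LPRule.neg_subset_negP hr)]

theorem stable_iff_neg_subset_general (P : LProgram α) (M : Set α) :
    isStable P M ↔
      ∃ B ⊆ (↑(negP P) : Set α),
        M = LM (reduct P ((↑(negP P) : Set α) \ B)) ∧
        B ∩ M = ∅ ∧ (↑(negP P) : Set α) \ B ⊆ M := by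
  set N : Set α := ↑(negP P)
  constructor
  · intro hM
    have hN : N \ (N \ M) = N ∩ M := Set.sdiff_sdiff_right_self N M
    refine ⟨N \ M, Set.sdiff_subset, ?_, ?_, ?_⟩
    · rwa [hN, reduct_negP_inter]
    · rw [Set.inter_comm, Set.inter_sdiff_self]
    · exact hN ▸ Set.inter_subset_right
  · rintro ⟨B, -, hLM, hBM, hNBM⟩
    have hN : N \ B = N ∩ M := by
      ext x
      constructor
      · exact fun hx => ⟨hx.1, hNBM hx⟩
      · exact fun hx => ⟨hx.1, fun hB => (Set.eq_empty_iff_forall_notMem.mp hBM) x ⟨hB, hx.2⟩⟩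
    rwa [isStable, ← reduct_negP_inter, ← hN]

/-- for `M ⊆ At(P)`, `M` is a stable model of `P` iff there exists
`B ⊆ Neg(P)` such that, with `B' = Neg(P) \ B`, `M = LM(P^{B'})`, `B ∩ M = ∅`
and `B' ⊆ M`. -/
theorem stable_iff_neg_subset (P : LProgram α) (M : Set α)
    (hM : M ⊆ (↑(atomsP P) : Set α)) :
    isStable P M ↔
      ∃ B ⊆ (↑(negP P) : Set α),
        M = LM (reduct P ((↑(negP P) : Set α) \ B)) ∧
        B ∩ M = ∅ ∧ (↑(negP P) : Set α) \ B ⊆ M :=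
  stable_iff_neg_subset_general P M
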